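/- arXiv:1008.1556 — 2 statements merged into one kernel-verified Lean document; each statement's English description precedes it below -/
import Mathlib

section
/- Let A¹, …, A^T be strategy profiles for a finite set L of links and let ε ≥ 0. If a link u has regret at most ε over A¹, …, A^T and q_u < 1/2 − ε, then f_u ≥ 1/4, where f_u is the fraction of rounds t in which u would have failed had it transmitted (i.e., utility_u(A^t ⊕_u 1) = −1). -/
open Finset

/-- A communication link: a sender–receiver pair of distinct points of a metric space. -/
structure Link (X : Type*) [MetricSpace X] where
  s : X
  r : X
  hne : s ≠ r

namespace Link
variable {X : Type*} [MetricSpace X]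

/-- The length `ℓ_v = d(s_v, r_v)` of a link. -/
noncomputable def len (v : Link X) : ℝ := dist v.s v.r

/-- `dd u v = d_{uv} = d(s_u, r_v)`. -/
noncomputable def dd (u v : Link X) : ℝ := dist u.s v.r

end Link

open Classical in
/-- Affectance of link `v` caused by link `u` under power assignment `P`
(zero ambient noise): `min {1, β (P_u/P_v) (ℓ_v/d_{uv})^α}`, and `0` if `u = v`. -/
noncomputable def aff {X : Type*} [MetricSpace X] (α β : ℝ) (P : Link X → ℝ)
    (u v : Link X) : ℝ :=
  if u = v then 0 else min 1 (β * (P u / P v) * (v.len / Link.dd u v) ^ α)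

/-- Affectance under uniform power (all powers equal to `1`). -/
noncomputable def affU {X : Type*} [MetricSpace X] (α β : ℝ) (u v : Link X) : ℝ :=
  aff α β (fun _ => 1) u v

open Classical in
/-- Utility of link `v` among the players `L` at strategy profile `A`:
`1` for a successful transmission, `-1` for a failed one, `0` for staying silent. -/
noncomputable def utility {X : Type*} [MetricSpace X] (α β : ℝ) (L : Finset (Link X))
    (A : Link X → Bool) (v : Link X) : ℝ :=
  if A v then
    (if ∑ u ∈ L.filter (fun u => A u = true), affU α β u v ≤ 1 then 1 else -1)
  else 0

open Classical in
/-- `A ⊕_v b`: the profile `A` with `v`'s action replaced by `b`. -/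
noncomputable def updAction {X : Type*} [MetricSpace X] (A : Link X → Bool)
    (v : Link X) (b : Bool) : Link X → Bool :=
  Function.update A v b

/-- The regret of link `v` over the strategy profiles `A 1, …, A T`. -/
noncomputable def regret {X : Type*} [MetricSpace X] (α β : ℝ) (L : Finset (Link X))
    (T : ℕ) (A : Fin T → Link X → Bool) (v : Link X) : ℝ :=
  max ((1 / T : ℝ) * ∑ t : Fin T, utility α β L (updAction (A t) v true) v)
      ((1 / T : ℝ) * ∑ t : Fin T, utility α β L (updAction (A t) v false) v)
    - (1 / T : ℝ) * ∑ t : Fin T, utility α β L (A t) v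

/-- `q_v`: the fraction of rounds in which `v` transmits. -/
noncomputable def qfrac {X : Type*} [MetricSpace X]
    (T : ℕ) (A : Fin T → Link X → Bool) (v : Link X) : ℝ :=
  ((Finset.univ.filter (fun t : Fin T => A t v = true)).card : ℝ) / T

open Classical in
/-- `x_v`: the fraction of rounds in which `v` transmits successfully. -/
noncomputable def xfrac {X : Type*} [MetricSpace X] (α β : ℝ) (L : Finset (Link X))
    (T : ℕ) (A : Fin T → Link X → Bool) (v : Link X) : ℝ :=
  ((Finset.univ.filter (fun t : Fin T => A t v = true ∧
      ∑ u ∈ L.filter (fun u => A t u = true), affU α β u v ≤ 1)).card : ℝ) / T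

open Classical in
/-- `f_v`: the fraction of rounds in which `v` would have failed had it transmitted. -/
noncomputable def ffrac {X : Type*} [MetricSpace X] (α β : ℝ) (L : Finset (Link X))
    (T : ℕ) (A : Fin T → Link X → Bool) (v : Link X) : ℝ :=
  ((Finset.univ.filter
      (fun t : Fin T => utility α β L (updAction (A t) v true) v = -1)).card : ℝ) / T

/-! A round earns at most `1` if `u` transmits and `0` otherwise, so the actual average
utility is at most `q_u`, while always transmitting earns `1` or `-1` per round, i.e. `1 - 2 f_u`
on average. Hence the regret is at least `1 - 2 f_u - q_u`, and regret `≤ ε` together with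
`q_u < 1/2 - ε` forces `f_u > 1/4`. -/

theorem Finset.sum_eq_card_sub_two_mul_card_filter_eq_neg_one {ι : Type*} (s : Finset ι)
    (g : ι → ℝ) (hg : ∀ i ∈ s, g i = 1 ∨ g i = -1) :
    ∑ i ∈ s, g i = #s - 2 * #(s.filter fun i => g i = -1) := by
  have hsplit : ∀ i ∈ s, g i = 1 - 2 * (if g i = -1 then 1 else 0) := by
    intro i hi
    rcases hg i hi with h | h <;> norm_num [h]
  rw [sum_congr rfl hsplit, sum_sub_distrib, ← mul_sum, sum_boole]
  simp

section Utility

variable {X : Type*} [MetricSpace X] (α β : ℝ) (L : Finset (Link X))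

theorem utility_eq_one_or_neg_one {A : Link X → Bool} {v : Link X} (hv : A v = true) :
    utility α β L A v = 1 ∨ utility α β L A v = -1 := by
  unfold utility
  split_ifs <;> simp

theorem utility_le_ite (A : Link X → Bool) (v : Link X) :
    utility α β L A v ≤ if A v = true then 1 else 0 := by
  unfold utility
  split_ifs <;> norm_num

theorem utility_updAction_true_eq_one_or_neg_one (A : Link X → Bool) (v : Link X) :
    utility α β L (updAction A v true) v = 1 ∨ utility α β L (updAction A v true) v = -1 :=
  utility_eq_one_or_neg_one α β L (by simp [updAction])

variable {T : ℕ} (A : Fin T → Link X → Bool) (v : Link X)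

theorem sum_utility_updAction_true :
    ∑ t, utility α β L (updAction (A t) v true) v =
      T - 2 * #{t | utility α β L (updAction (A t) v true) v = -1} := by
  rw [sum_eq_card_sub_two_mul_card_filter_eq_neg_one _ _
    fun t _ => utility_updAction_true_eq_one_or_neg_one α β L (A t) v]
  simp

theorem sum_utility_le_card_transmit :
    ∑ t, utility α β L (A t) v ≤ #{t | A t v = true} := by
  rw [← sum_boole]
  exact sum_le_sum fun t _ => utility_le_ite α β L (A t) v

theorem one_sub_two_mul_ffrac_sub_qfrac_le_regret (hT : 0 < T) :
    1 - 2 * ffrac α β L T A v - qfrac T A v ≤ regret α β L T A v := by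
  have hT' : (T : ℝ) ≠ 0 := by positivity
  have always_transmit :
      (1 / T : ℝ) * ∑ t, utility α β L (updAction (A t) v true) v =
        1 - 2 * ffrac α β L T A v := by
    rw [sum_utility_updAction_true, ffrac]
    field_simp
  have actual : (1 / T : ℝ) * ∑ t, utility α β L (A t) v ≤ qfrac T A v := by
    rw [qfrac, one_div_mul_eq_div]
    gcongr
    exact sum_utility_le_card_transmit α β L A v
  rw [regret, always_transmit]
  linarith [le_max_left (1 - 2 * ffrac α β L T A v)
    ((1 / T : ℝ) * ∑ t, utility α β L (updAction (A t) v false) v)]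

end Utility

theorem low_transmit_implies_often_fail_general {X : Type*} [MetricSpace X] (α β : ℝ)
    (L : Finset (Link X)) (T : ℕ) (hT : 0 < T)
    (A : Fin T → Link X → Bool) (ε : ℝ)
    (u : Link X)
    (hreg : regret α β L T A u ≤ ε)
    (hq : qfrac T A u < 1 / 2 - ε) :
    1 / 4 ≤ ffrac α β L T A u := by
  linarith [one_sub_two_mul_ffrac_sub_qfrac_le_regret α β L A u hT]

/-- a link with regret at most `ε` which transmits in fewer than a
`1/2 - ε` fraction of the rounds must fail in at least a quarter of the rounds
(had it transmitted). -/
theorem low_transmit_implies_often_fail {X : Type*} [MetricSpace X] (α β : ℝ)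
    (hα : 0 < α) (hβ : 1 ≤ β)
    (L : Finset (Link X)) (T : ℕ) (hT : 0 < T)
    (A : Fin T → Link X → Bool) (ε : ℝ) (hε : 0 ≤ ε)
    (u : Link X) (hu : u ∈ L)
    (hreg : regret α β L T A u ≤ ε)
    (hq : qfrac T A u < 1 / 2 - ε) :
    1 / 4 ≤ ffrac α β L T A u :=
  low_transmit_implies_often_fail_general α β L T hT A ε u hreg hq
end

section
/- Let A¹, …, A^T be strategy profiles for a finite set L of n links and let ε ≥ 0. Let q_v be the fraction of rounds in which v transmits, x_v the fraction of rounds in which v transmits successfully, Q = Σ_{v∈L} q_v and X = Σ_{v∈L} x_v. Then X ≤ Q always, and if every link has regret at most ε over A¹, …, A^T, then Q ≤ 2X + εn. -/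
open Finset

/-- `X ≤ Q` always, and if every link has regret at most `ε` then
`Q ≤ 2X + εn`. -/
theorem successes_vs_attempts {X : Type*} [MetricSpace X] (α β : ℝ)
    (hα : 0 < α) (hβ : 1 ≤ β)
    (L : Finset (Link X)) (T : ℕ) (hT : 0 < T)
    (A : Fin T → Link X → Bool) (ε : ℝ) (hε : 0 ≤ ε) :
    (∑ v ∈ L, xfrac α β L T A v) ≤ (∑ v ∈ L, qfrac T A v) ∧
    ((∀ v ∈ L, regret α β L T A v ≤ ε) →
      (∑ v ∈ L, qfrac T A v) ≤ 2 * (∑ v ∈ L, xfrac α β L T A v) + ε * L.card) := by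
  classical
  have hT' : (0:ℝ) < T := by exact_mod_cast hT
  have hxq : ∀ v : Link X, xfrac α β L T A v ≤ qfrac T A v := by
    intro v
    unfold xfrac qfrac
    have hsub : (Finset.univ.filter (fun t : Fin T => A t v = true ∧
        ∑ u ∈ L.filter (fun u => A t u = true), affU α β u v ≤ 1)) ⊆
        (Finset.univ.filter (fun t : Fin T => A t v = true)) := by
      intro t ht
      simp only [Finset.mem_filter] at ht ⊢
      exact ⟨ht.1, ht.2.1⟩
    have := Finset.card_le_card hsub
    gcongr
  refine ⟨Finset.sum_le_sum (fun v _ => hxq v), fun hreg => ?_⟩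
  -- key per-link inequality
  have key : ∀ v ∈ L, qfrac T A v - 2 * xfrac α β L T A v ≤ ε := by
    intro v hv
    set C : Fin T → Prop := fun t =>
      ∑ u ∈ L.filter (fun u => A t u = true), affU α β u v ≤ 1 with hC
    have hU : ∀ t : Fin T, utility α β L (A t) v =
        (if A t v = true ∧ C t then (1:ℝ) else 0) -
        (if A t v = true ∧ ¬ C t then (1:ℝ) else 0) := by
      intro t
      unfold utility
      by_cases h1 : A t v <;>
        by_cases h2 : (∑ u ∈ L.filter (fun u => A t u = true), affU α β u v ≤ 1) <;>
        simp [h1, h2, hC]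
    have hsum : ∑ t : Fin T, utility α β L (A t) v =
        ((Finset.univ.filter (fun t : Fin T => A t v = true ∧ C t)).card : ℝ) -
        ((Finset.univ.filter (fun t : Fin T => A t v = true ∧ ¬ C t)).card : ℝ) := by
      simp only [hU, Finset.sum_sub_distrib, Finset.sum_boole]
    have hcards : (Finset.univ.filter (fun t : Fin T => A t v = true ∧ C t)).card +
        (Finset.univ.filter (fun t : Fin T => A t v = true ∧ ¬ C t)).card =
        (Finset.univ.filter (fun t : Fin T => A t v = true)).card := by
      rw [← Finset.filter_filter, ← Finset.filter_filter]
      exact Finset.card_filter_add_card_filter_not (p := C)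
    have hfalse : ∑ t : Fin T, utility α β L (updAction (A t) v false) v = 0 := by
      apply Finset.sum_eq_zero
      intro t _
      simp [utility, updAction]
    have hreg' := hreg v hv
    have hge : (1 / T : ℝ) * ∑ t : Fin T, utility α β L (updAction (A t) v false) v
        - (1 / T : ℝ) * ∑ t : Fin T, utility α β L (A t) v ≤ regret α β L T A v := by
      unfold regret
      have := le_max_right ((1 / T : ℝ) * ∑ t : Fin T, utility α β L (updAction (A t) v true) v)
        ((1 / T : ℝ) * ∑ t : Fin T, utility α β L (updAction (A t) v false) v)
      linarith
    rw [hfalse, mul_zero] at hge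
    -- identify q and x with the card expressions
    have hq : qfrac T A v =
        ((Finset.univ.filter (fun t : Fin T => A t v = true)).card : ℝ) / T := rfl
    have hx : xfrac α β L T A v =
        ((Finset.univ.filter (fun t : Fin T => A t v = true ∧ C t)).card : ℝ) / T := rfl
    have hcardsR : ((Finset.univ.filter (fun t : Fin T => A t v = true ∧ C t)).card : ℝ) +
        ((Finset.univ.filter (fun t : Fin T => A t v = true ∧ ¬ C t)).card : ℝ) =
        ((Finset.univ.filter (fun t : Fin T => A t v = true)).card : ℝ) := by
      exact_mod_cast hcards
    have hqx : qfrac T A v - 2 * xfrac α β L T A v =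
        (1 / T : ℝ) * (((Finset.univ.filter (fun t : Fin T => A t v = true ∧ ¬ C t)).card : ℝ)
          - ((Finset.univ.filter (fun t : Fin T => A t v = true ∧ C t)).card : ℝ)) := by
      rw [hq, hx, ← hcardsR]
      field_simp
      ring
    rw [hqx]
    calc (1 / T : ℝ) * _ = (0 : ℝ) - (1 / T : ℝ) * ∑ t : Fin T, utility α β L (A t) v := by
          rw [hsum]; ring
      _ ≤ regret α β L T A v := hge
      _ ≤ ε := hreg'
  have := Finset.sum_le_sum key
  rw [Finset.sum_sub_distrib, Finset.sum_const, nsmul_eq_mul] at this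
  have h2 : ∑ v ∈ L, 2 * xfrac α β L T A v = 2 * ∑ v ∈ L, xfrac α β L T A v := by
    rw [Finset.mul_sum]
  rw [h2] at this
  linarith
end
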